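/- arXiv:2310.04163 — 5 statements merged into one kernel-verified Lean document; each statement's English description precedes it below -/
import Mathlib

section
/- Let $\Psi=e^\psi-1$ be an Orlicz function, strictly increasing, satisfying the condition (HJ): there exists $K>0$ such that $\psi(su)\le K(s\ln(1+s)+s\psi(u))$ for all $s,u\ge K$. Then there exists $\widehat{K}>0$ such that $\widehat{K}\ln(1+x)\,\psi^{-1}(xy)\ge x\,\psi^{-1}(y)$ for all $x,y\ge\widehat{K}$. -/
open MeasureTheory ProbabilityTheory

/-- An Orlicz function: convex, strictly increasing on `[0,∞)`, vanishing at `0`. -/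
def IsOrlicz (Ψ : ℝ → ℝ) : Prop :=
  ConvexOn ℝ (Set.Ici 0) Ψ ∧ StrictMonoOn Ψ (Set.Ici 0) ∧ Ψ 0 = 0

/-- The associated exponent `ψ` with `Ψ = e^ψ - 1`. -/
noncomputable def orliczExp (Ψ : ℝ → ℝ) (x : ℝ) : ℝ := Real.log (1 + Ψ x)

/-- The Orlicz (Luxemburg) norm of a Banach-space-valued random variable. -/
noncomputable def orliczNorm {Ω : Type*} [MeasurableSpace Ω] (μ : Measure Ω)
    (Ψ : ℝ → ℝ) {F : Type*} [NormedAddCommGroup F] (X : Ω → F) : ℝ :=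
  sInf {a : ℝ | 0 < a ∧ ∫⁻ ω, ENNReal.ofReal (Ψ (‖X ω‖ / a)) ∂μ ≤ 1}

/-- `X` has finite Orlicz norm. -/
def OrliczFinite {Ω : Type*} [MeasurableSpace Ω] (μ : Measure Ω)
    (Ψ : ℝ → ℝ) {F : Type*} [NormedAddCommGroup F] (X : Ω → F) : Prop :=
  ∃ a : ℝ, 0 < a ∧ ∫⁻ ω, ENNReal.ofReal (Ψ (‖X ω‖ / a)) ∂μ ≤ 1

/-- Condition (HJ): `ψ(su) ≤ K (s ln(1+s) + s ψ(u))` for all `s, u ≥ K`. -/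
def HJCond (Ψ : ℝ → ℝ) : Prop :=
  ∃ K > (0:ℝ), ∀ s u : ℝ, K ≤ s → K ≤ u →
    orliczExp Ψ (s * u) ≤ K * (s * Real.log (1 + s) + s * orliczExp Ψ u)

/-- A Rademacher (symmetric ±1) random variable. -/
def IsRademacher {Ω : Type*} [MeasurableSpace Ω] (μ : Measure Ω) (ε : Ω → ℝ) : Prop :=
  μ {ω | ε ω = 1} = 1/2 ∧ μ {ω | ε ω = -1} = 1/2

/-!
Since `ψinv` is only known to be a left inverse of `ψ`, we first show that `ψ` maps `[a, ∞)` onto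
`[ψ a, ∞)` for `a > 0` (convexity makes `Ψ` continuous and at least linear), so that `ψ a ≤ y`
gives `a ≤ ψinv y` and `ψ (ψinv y) = y`. With `K ≥ 1` from (HJ), apply (HJ) to `u = ψinv y` and
`s = x / (2K ln(1+x))`: the right-hand side is at most `xy`, so `s ψinv y ≤ ψinv (xy)`, which is the
claim with `K̂ = 2K`. When this `s` is below `K`, instead `x < 2K² ln(1+x)` and the claim reduces to
monotonicity of `ψinv`.
-/

open Set Filter

section

variable {Ψ ψinv : ℝ → ℝ}

def HJCondWith (Ψ : ℝ → ℝ) (K : ℝ) : Prop :=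
  ∀ s u : ℝ, K ≤ s → K ≤ u →
    orliczExp Ψ (s * u) ≤ K * (s * Real.log (1 + s) + s * orliczExp Ψ u)

namespace IsOrlicz

theorem nonneg (hΨ : IsOrlicz Ψ) {x : ℝ} (hx : 0 ≤ x) : 0 ≤ Ψ x :=
  hΨ.2.2 ▸ hΨ.2.1.monotoneOn self_mem_Ici hx hx

theorem orliczExp_nonneg (hΨ : IsOrlicz Ψ) {x : ℝ} (hx : 0 ≤ x) : 0 ≤ orliczExp Ψ x :=
  Real.log_nonneg (by linarith [hΨ.nonneg hx])

theorem mul_apply_one_le (hΨ : IsOrlicz Ψ) {x : ℝ} (hx : 1 ≤ x) : x * Ψ 1 ≤ Ψ x := by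
  have hslope := hΨ.1.secant_mono (a := 0) self_mem_Ici (mem_Ici.2 zero_le_one)
    (mem_Ici.2 (by linarith)) one_ne_zero (by linarith) hx
  rw [hΨ.2.2, sub_zero, sub_zero, sub_zero, sub_zero, div_one, le_div_iff₀ (by linarith)] at hslope
  linarith

theorem tendsto_orliczExp_atTop (hΨ : IsOrlicz Ψ) : Tendsto (orliczExp Ψ) atTop atTop := by
  have hΨ1 : 0 < Ψ 1 := hΨ.2.2 ▸ hΨ.2.1 self_mem_Ici (mem_Ici.2 zero_le_one) one_pos
  have hΨtop : Tendsto Ψ atTop atTop :=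
    tendsto_atTop_mono' atTop ((eventually_ge_atTop 1).mono fun _ hx => hΨ.mul_apply_one_le hx)
      (tendsto_id.atTop_mul_const hΨ1)
  exact Real.tendsto_log_atTop.comp (tendsto_atTop_add_const_left _ 1 hΨtop)

theorem continuousOn_orliczExp (hΨ : IsOrlicz Ψ) : ContinuousOn (orliczExp Ψ) (Ioi 0) := by
  have hcont : ContinuousOn Ψ (Ioi 0) := interior_Ici (a := (0 : ℝ)) ▸ hΨ.1.continuousOn_interior
  refine ContinuousOn.log (continuousOn_const.add hcont) fun x hx => ?_
  linarith [hΨ.nonneg (le_of_lt hx)]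

theorem exists_orliczExp_eq (hΨ : IsOrlicz Ψ) {a y : ℝ} (ha : 0 < a) (hy : orliczExp Ψ a ≤ y) :
    ∃ x, a ≤ x ∧ orliczExp Ψ x = y := by
  obtain ⟨M, hyM, haM⟩ :=
    ((hΨ.tendsto_orliczExp_atTop.eventually_ge_atTop y).and (eventually_ge_atTop a)).exists
  obtain ⟨x, hx, hxy⟩ := intermediate_value_Icc haM
    (hΨ.continuousOn_orliczExp.mono fun z hz => lt_of_lt_of_le ha hz.1) ⟨hy, hyM⟩
  exact ⟨x, hx.1, hxy⟩

end IsOrlicz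

theorem le_inv_of_orliczExp_le (hΨ : IsOrlicz Ψ) (hinv : LeftInvOn ψinv (orliczExp Ψ) (Ici 0))
    {a y : ℝ} (ha : 0 < a) (hy : orliczExp Ψ a ≤ y) : a ≤ ψinv y := by
  obtain ⟨x, hax, rfl⟩ := hΨ.exists_orliczExp_eq ha hy
  rwa [hinv (mem_Ici.2 (ha.le.trans hax))]

theorem orliczExp_inv_eq (hΨ : IsOrlicz Ψ) (hinv : LeftInvOn ψinv (orliczExp Ψ) (Ici 0))
    {a y : ℝ} (ha : 0 < a) (hy : orliczExp Ψ a ≤ y) : orliczExp Ψ (ψinv y) = y := by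
  obtain ⟨x, hax, rfl⟩ := hΨ.exists_orliczExp_eq ha hy
  rw [hinv (mem_Ici.2 (ha.le.trans hax))]

theorem inv_le_inv_of_orliczExp_le (hΨ : IsOrlicz Ψ) (hinv : LeftInvOn ψinv (orliczExp Ψ) (Ici 0))
    {a y₁ y₂ : ℝ} (ha : 0 < a) (hy₁ : orliczExp Ψ a ≤ y₁) (hy : y₁ ≤ y₂) : ψinv y₁ ≤ ψinv y₂ :=
  le_inv_of_orliczExp_le hΨ hinv (ha.trans_le (le_inv_of_orliczExp_le hΨ hinv ha hy₁))
    ((orliczExp_inv_eq hΨ hinv ha hy₁).trans_le hy)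

theorem mul_inv_le_inv_of_hj (hΨ : IsOrlicz Ψ) (hinv : LeftInvOn ψinv (orliczExp Ψ) (Ici 0))
    {K s y z : ℝ} (hK : 0 < K) (hHJ : HJCondWith Ψ K) (hs : K ≤ s)
    (hy : orliczExp Ψ K ≤ y) (hz : K * (s * Real.log (1 + s) + s * y) ≤ z) :
    s * ψinv y ≤ ψinv z := by
  have hu : K ≤ ψinv y := le_inv_of_orliczExp_le hΨ hinv hK hy
  refine le_inv_of_orliczExp_le hΨ hinv (mul_pos (hK.trans_le hs) (hK.trans_le hu)) ?_
  calc orliczExp Ψ (s * ψinv y)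
      ≤ K * (s * Real.log (1 + s) + s * orliczExp Ψ (ψinv y)) := hHJ s _ hs hu
    _ = K * (s * Real.log (1 + s) + s * y) := by rw [orliczExp_inv_eq hΨ hinv hK hy]
    _ ≤ z := hz

theorem HJCond.exists_one_le (hΨ : IsOrlicz Ψ) (hHJ : HJCond Ψ) :
    ∃ K ≥ (1 : ℝ), HJCondWith Ψ K := by
  obtain ⟨K, hK, hHJ⟩ := hHJ
  refine ⟨max K 1, le_max_right _ _, fun s u hs hu => ?_⟩
  have hs₀ : 0 ≤ s := by linarith [le_max_right K 1]
  have hRHS : 0 ≤ s * Real.log (1 + s) + s * orliczExp Ψ u :=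
    add_nonneg (mul_nonneg hs₀ (Real.log_nonneg (by linarith)))
      (mul_nonneg hs₀ (hΨ.orliczExp_nonneg (by linarith [le_max_right K 1])))
  exact (hHJ s u ((le_max_left K 1).trans hs) ((le_max_left K 1).trans hu)).trans
    (mul_le_mul_of_nonneg_right (le_max_left K 1) hRHS)

theorem one_le_log_one_add {x : ℝ} (hx : 2 ≤ x) : 1 ≤ Real.log (1 + x) := by
  rw [Real.le_log_iff_exp_le (by linarith)]
  linarith [Real.exp_one_lt_d9]

theorem mul_inv_le_log_mul_inv (hΨ : IsOrlicz Ψ) (hinv : LeftInvOn ψinv (orliczExp Ψ) (Ici 0))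
    {K x y : ℝ} (hK : 1 ≤ K) (hHJ : HJCondWith Ψ K) (hx : 2 ≤ x)
    (hy : orliczExp Ψ K ≤ y) (hy₁ : 1 ≤ y) :
    x * ψinv y ≤ 2 * K ^ 2 * Real.log (1 + x) * ψinv (x * y) := by
  set L := Real.log (1 + x)
  have hL : 1 ≤ L := one_le_log_one_add hx
  have hu : K ≤ ψinv y := le_inv_of_orliczExp_le hΨ hinv (by linarith) hy
  have hmono : ψinv y ≤ ψinv (x * y) :=
    inv_le_inv_of_orliczExp_le hΨ hinv (by linarith) hy (by nlinarith)
  by_cases hs : K ≤ x / (2 * K * L)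
  · set s := x / (2 * K * L)
    have hsL : s * (2 * K * L) = x := div_mul_cancel₀ x (by positivity)
    have hs₀ : 0 ≤ s := by linarith
    have hsx : s ≤ x := by
      nlinarith [mul_le_mul_of_nonneg_left (one_le_mul_of_one_le_of_one_le hK hL) hs₀]
    have hlog : Real.log (1 + s) ≤ L := Real.log_le_log (by linarith) (by linarith)
    have hz : K * (s * Real.log (1 + s) + s * y) ≤ x * y := by
      nlinarith [mul_le_mul_of_nonneg_left hlog hs₀,
        mul_le_mul_of_nonneg_left hL (mul_nonneg hs₀ (by linarith : (0 : ℝ) ≤ y))]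
    have hsu := mul_inv_le_inv_of_hj hΨ hinv (by linarith) hHJ hs hy hz
    calc x * ψinv y = 2 * K * L * (s * ψinv y) := by rw [← hsL]; ring
      _ ≤ 2 * K * L * ψinv (x * y) := by gcongr
      _ ≤ 2 * K ^ 2 * L * ψinv (x * y) := by gcongr <;> nlinarith
  · have hx' : x ≤ 2 * K ^ 2 * L := by
      rw [not_le, div_lt_iff₀ (by positivity)] at hs; nlinarith
    calc x * ψinv y ≤ 2 * K ^ 2 * L * ψinv y := by gcongr; linarith
      _ ≤ 2 * K ^ 2 * L * ψinv (x * y) := by gcongr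

end

theorem stmt2_general {Ψ ψinv : ℝ → ℝ} (hΨ : IsOrlicz Ψ) (hHJ : HJCond Ψ)
    (hinv1 : ∀ x ≥ (0:ℝ), ψinv (orliczExp Ψ x) = x) :
    ∃ Khat > (0:ℝ), ∀ x y : ℝ, Khat ≤ x → Khat ≤ y →
      x * ψinv y ≤ Khat * Real.log (1 + x) * ψinv (x * y) := by
  obtain ⟨K, hK, hHJK⟩ := HJCond.exists_one_le hΨ hHJ
  have hψK : 0 ≤ orliczExp Ψ K := hΨ.orliczExp_nonneg (by linarith)
  have hK2 : 0 ≤ K ^ 2 := sq_nonneg K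
  refine ⟨2 * K ^ 2 + orliczExp Ψ K + 2, by positivity, fun x y hx hy => ?_⟩
  have hxy : orliczExp Ψ K ≤ x * y := by nlinarith
  have hv : K ≤ ψinv (x * y) := le_inv_of_orliczExp_le hΨ hinv1 (by linarith) hxy
  calc x * ψinv y ≤ 2 * K ^ 2 * Real.log (1 + x) * ψinv (x * y) :=
        mul_inv_le_log_mul_inv hΨ hinv1 hK hHJK (by linarith) (by linarith) (by linarith)
    _ ≤ (2 * K ^ 2 + orliczExp Ψ K + 2) * Real.log (1 + x) * ψinv (x * y) := by
        gcongr
        · linarith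
        · exact Real.log_nonneg (by linarith)
        · linarith

/-- If `Ψ` satisfies (HJ), then `K̂ ln(1+x) ψ⁻¹(xy) ≥ x ψ⁻¹(y)` for `x, y ≥ K̂`. -/
theorem stmt2 {Ψ ψinv : ℝ → ℝ} (hΨ : IsOrlicz Ψ) (hHJ : HJCond Ψ)
    (hinv1 : ∀ x ≥ (0:ℝ), ψinv (orliczExp Ψ x) = x)
    (hinv2 : ∀ y ≥ (0:ℝ), orliczExp Ψ (ψinv y) = y) :
    ∃ Khat > (0:ℝ), ∀ x y : ℝ, Khat ≤ x → Khat ≤ y →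
      x * ψinv y ≤ Khat * Real.log (1 + x) * ψinv (x * y) :=
  stmt2_general hΨ hHJ hinv1
end

section
/- Let $\Psi(x)=e^{\psi(x)}-1$ be an Orlicz function such that $\psi$ is concave on $[x_0,\infty)$ for some $x_0\ge 0$. Then $\psi(su)\le 3s\,\psi(u)$ for all $s,u\ge\max(1,2x_0)$; in particular $\Psi$ satisfies the condition (HJ). -/
open MeasureTheory ProbabilityTheory

/-- If `ψ` is eventually concave then `ψ(su) ≤ 3 s ψ(u)` for `s,u ≥ max(1, 2x₀)`;
in particular `Ψ` satisfies (HJ). -/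
theorem stmt7 {Ψ : ℝ → ℝ} (hΨ : IsOrlicz Ψ) {x₀ : ℝ} (hx₀ : 0 ≤ x₀)
    (hconc : ConcaveOn ℝ (Set.Ici x₀) (orliczExp Ψ)) :
    (∀ s u : ℝ, max 1 (2 * x₀) ≤ s → max 1 (2 * x₀) ≤ u →
        orliczExp Ψ (s * u) ≤ 3 * s * orliczExp Ψ u) ∧
      HJCond Ψ := by

  obtain ⟨hconv, hmono, h0⟩ := hΨ
  have hψ0 : ∀ x : ℝ, 0 ≤ x → 0 ≤ orliczExp Ψ x := by
    intro x hx
    have h1 : Ψ 0 ≤ Ψ x := hmono.monotoneOn (by simp) hx hx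
    rw [h0] at h1
    exact Real.log_nonneg (by linarith)
  have main : ∀ s u : ℝ, max 1 (2 * x₀) ≤ s → max 1 (2 * x₀) ≤ u →
      orliczExp Ψ (s * u) ≤ 3 * s * orliczExp Ψ u := by
    intro s u hs hu
    have hs1 : 1 ≤ s := le_trans (le_max_left _ _) hs
    have hu1 : 1 ≤ u := le_trans (le_max_left _ _) hu
    have hux : 2 * x₀ ≤ u := le_trans (le_max_right _ _) hu
    have hdu : 0 < u - x₀ := by linarith
    have hsu : u ≤ s * u := le_mul_of_one_le_left (by linarith) hs1
    have hdsu : 0 < s * u - x₀ := by linarith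
    set t := (u - x₀) / (s * u - x₀) with ht
    have ht0 : 0 < t := div_pos hdu hdsu
    have htm : t * (s * u - x₀) = u - x₀ := div_mul_cancel₀ _ hdsu.ne'
    have ht1 : t ≤ 1 := by rw [div_le_one hdsu]; linarith
    have hkey := hconc.2 (Set.self_mem_Ici)
      (show s * u ∈ Set.Ici x₀ from by simp only [Set.mem_Ici]; linarith)
      (by linarith : (0:ℝ) ≤ 1 - t) ht0.le (by ring)
    simp only [smul_eq_mul] at hkey
    have hcomb : (1 - t) * x₀ + t * (s * u) = u := by nlinarith [htm]
    rw [hcomb] at hkey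
    have hψx₀ : 0 ≤ orliczExp Ψ x₀ := hψ0 x₀ hx₀
    have h2 : t * orliczExp Ψ (s * u) ≤ orliczExp Ψ u := by nlinarith
    have h1 : (u - x₀) * orliczExp Ψ (s * u) ≤ (s * u - x₀) * orliczExp Ψ u := by
      have e : (u - x₀) * orliczExp Ψ (s * u) = t * orliczExp Ψ (s * u) * (s * u - x₀) := by
        rw [← htm]; ring
      have := mul_le_mul_of_nonneg_right h2 hdsu.le
      linarith [e ▸ this]
    have h3 : s * u - x₀ ≤ 2 * s * (u - x₀) := by
      nlinarith [mul_le_mul_of_nonneg_right (show x₀ ≤ u / 2 by linarith)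
        (show (0:ℝ) ≤ 2 * s - 1 by linarith)]
    have hψu : 0 ≤ orliczExp Ψ u := hψ0 u (by linarith)
    nlinarith [mul_le_mul_of_nonneg_right h3 hψu, mul_nonneg (mul_nonneg (by linarith : (0:ℝ) ≤ s) hψu) hdu.le]
  refine ⟨main, 3 + max 1 (2 * x₀), by positivity, ?_⟩
  intro s u hs hu
  have hm : max 1 (2 * x₀) ≤ 3 + max 1 (2 * x₀) := by linarith [le_max_left (1:ℝ) (2*x₀)]
  have h := main s u (le_trans hm hs) (le_trans hm hu)
  have hs3 : 3 ≤ s := le_trans (by linarith [le_max_left (1:ℝ) (2*x₀)]) hs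
  have hK3 : (3:ℝ) ≤ 3 + max 1 (2 * x₀) := by linarith [le_max_left (1:ℝ) (2*x₀)]
  have hψu : 0 ≤ orliczExp Ψ u := hψ0 u (by linarith [le_max_left (1:ℝ) (2*x₀), le_trans hm hu])
  have hlog : 0 ≤ Real.log (1 + s) := Real.log_nonneg (by linarith)
  nlinarith [mul_nonneg (mul_nonneg (by linarith : (0:ℝ) ≤ s) hψu) (by linarith [le_max_left (1:ℝ) (2*x₀)] : (0:ℝ) ≤ max 1 (2*x₀)), mul_nonneg (mul_nonneg (by positivity : (0:ℝ) ≤ 3 + max 1 (2*x₀)) (by linarith : (0:ℝ) ≤ s)) hlog]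
end

section
/- Let $\Phi$ be an Orlicz function with $\limsup_{x\to\infty}\Phi(x)/x^p=\infty$ for every $p>0$. Then there exists an Orlicz function $\Psi$ such that $\Psi(x)\le\Phi(x)$ for all sufficiently large $x$ and $\Psi$ does not satisfy the condition (HJ). -/
open MeasureTheory ProbabilityTheory

set_option maxHeartbeats 2000000 in
/-- For any Orlicz `Φ` of superpolynomial growth there is an Orlicz function `Ψ ≤ Φ`
(eventually) not satisfying (HJ). -/
theorem stmt9 {Φ : ℝ → ℝ} (hΦ : IsOrlicz Φ)
    (hsup : ∀ p > (0:ℝ), ∀ C : ℝ, ∀ x₀ : ℝ, ∃ x ≥ x₀, C * x ^ p < Φ x) :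
    ∃ Ψ : ℝ → ℝ, IsOrlicz Ψ ∧ (∃ x₁ : ℝ, ∀ x ≥ x₁, Ψ x ≤ Φ x) ∧ ¬ HJCond Ψ := by
  obtain ⟨hconv, hmonoΦ, hΦ0⟩ := hΦ
  have hmono : MonotoneOn Φ (Set.Ici 0) := hmonoΦ.monotoneOn
  have hΦnonneg : ∀ x : ℝ, 0 ≤ x → 0 ≤ Φ x := by
    intro x hx
    rcases hx.eq_or_lt with h | h
    · rw [← h, hΦ0]
    · have := hmonoΦ Set.self_mem_Ici (Set.mem_Ici.2 hx) h
      rw [hΦ0] at this; exact this.le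
  have hΦpos : ∀ x : ℝ, 0 < x → 0 < Φ x := by
    intro x hx
    have := hmonoΦ Set.self_mem_Ici (Set.mem_Ici.2 hx.le) hx
    rwa [hΦ0] at this
  -- chord inequality : for 0 ≤ y ≤ x, x * Φ y ≤ y * Φ x
  have hchord : ∀ x y : ℝ, 0 ≤ y → y ≤ x → x * Φ y ≤ y * Φ x := by
    intro x y hy hyx
    rcases (hy.trans hyx).eq_or_lt with h | hx
    · have hy0 : y = 0 := le_antisymm (h ▸ hyx) hy
      rw [hy0, ← h]
    · have ht0 : (0:ℝ) ≤ y / x := div_nonneg hy hx.le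
      have ht1 : y / x ≤ 1 := (div_le_one hx).2 hyx
      have hc := hconv.2 (Set.mem_Ici.2 hx.le) Set.self_mem_Ici ht0
        (by linarith : (0:ℝ) ≤ 1 - y / x) (by ring)
      simp only [smul_eq_mul, mul_zero, add_zero, hΦ0] at hc
      rw [div_mul_cancel₀ _ (ne_of_gt hx)] at hc
      calc x * Φ y ≤ x * (y / x * Φ x) :=
            mul_le_mul_of_nonneg_left hc hx.le
        _ = y * Φ x := by field_simp
  -- choose the sparse sequence
  have key : ∀ (n : ℕ) (y : ℝ), ∃ x, y ≤ x ∧ x ^ ((n:ℝ)+1) < Φ x := by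
    intro n y
    obtain ⟨x, hx1, hx2⟩ := hsup ((n:ℝ)+1) (by positivity) 1 y
    exact ⟨x, hx1, by rwa [one_mul] at hx2⟩
  choose f hf₁ hf₂ using key
  set step : ℕ → ℝ → ℝ :=
    fun n prev => f (n+1) ((n:ℝ) + 1 + 2*prev + Real.exp (1 + Φ (2*prev))) with hstep_def
  set A : ℕ → ℝ := fun n => Nat.rec (f 0 1) step n with hA_def
  have haS : ∀ n, A (n+1) = f (n+1) ((n:ℝ) + 1 + 2*(A n) + Real.exp (1 + Φ (2*(A n)))) :=
    fun n => rfl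
  have hstep : ∀ n : ℕ, (n:ℝ) + 1 + 2*(A n) + Real.exp (1 + Φ (2*(A n))) ≤ A (n+1) := by
    intro n; rw [haS n]; exact hf₁ _ _
  have hPhiA : ∀ n, (A (n+1)) ^ (((n+1:ℕ):ℝ)+1) < Φ (A (n+1)) := by
    intro n; rw [haS n]; exact hf₂ _ _
  have ha1 : ∀ n, 1 ≤ A n := by
    intro n
    induction n with
    | zero => exact hf₁ 0 1
    | succ k ih =>
      have h1 := hstep k
      have h2 := Real.exp_pos (1 + Φ (2*(A k)))
      have h3 : (0:ℝ) ≤ (k:ℝ) := Nat.cast_nonneg k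
      linarith
  have hamono : Monotone A := by
    apply monotone_nat_of_le_succ
    intro n
    have h1 := hstep n
    have h2 := Real.exp_pos (1 + Φ (2*(A n)))
    have h3 : (0:ℝ) ≤ (n:ℝ) := Nat.cast_nonneg n
    have h4 := ha1 n
    linarith
  clear haS
  clear hstep_def hA_def
  clear_value A
  clear step
  -- the spike lines
  set D : ℕ → ℝ := fun n => (Φ (2 * A n) - Φ (A n)) / A n with hD_def
  set L : ℕ → ℝ → ℝ := fun n x => Φ (A n) + D n * (x - 2 * A n) with hL_def
  have han_pos : ∀ n, (0:ℝ) < A n := fun n => lt_of_lt_of_le one_pos (ha1 n)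
  have hΦle2 : ∀ n, Φ (A n) ≤ Φ (2 * A n) := by
    intro n
    exact hmono (Set.mem_Ici.2 (han_pos n).le)
      (Set.mem_Ici.2 (by linarith [han_pos n])) (by linarith [han_pos n])
  have hD0 : ∀ n, 0 ≤ D n := by
    intro n
    exact div_nonneg (by linarith [hΦle2 n]) (han_pos n).le
  -- each line lies below Φ on [0, ∞)
  have hL_le : ∀ n x, 0 ≤ x → L n x ≤ Φ x := by
    intro n x hx
    have hapos := han_pos n
    rcases le_or_gt x (A n) with hxa | hxa
    · -- x ≤ A n : use secant monotonicity at base point 2 * A n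
      have h := hconv.secant_mono (a := 2 * A n) (x := x) (y := A n)
        (Set.mem_Ici.2 (by linarith)) (Set.mem_Ici.2 hx) (Set.mem_Ici.2 hapos.le)
        (by intro h; rw [h] at hxa; linarith) (by intro h; nlinarith) hxa
      have e1 : Φ x - Φ (2*A n) = -(Φ (2*A n) - Φ x) := by ring
      have e2 : x - 2*A n = -(2*A n - x) := by ring
      have e3 : Φ (A n) - Φ (2*A n) = -(Φ (2*A n) - Φ (A n)) := by ring
      have e4 : A n - 2*A n = -(A n) := by ring
      rw [e1, e2, e3, e4, neg_div_neg_eq, neg_div_neg_eq] at h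
      have h5 : Φ (2*A n) - Φ x ≤ (Φ (2*A n) - Φ (A n)) / A n * (2*A n - x) := by
        rw [div_le_iff₀ (by linarith : (0:ℝ) < 2*A n - x)] at h
        linarith
      simp only [hL_def, hD_def]
      nlinarith [hΦle2 n]
    · rcases le_or_gt x (2 * A n) with hx2 | hx2
      · -- A n < x ≤ 2 A n
        have h1 : Φ (A n) ≤ Φ x := hmono (Set.mem_Ici.2 hapos.le) (Set.mem_Ici.2 hx) hxa.le
        have h2 : D n * (x - 2*A n) ≤ 0 :=
          mul_nonpos_of_nonneg_of_nonpos (hD0 n) (by linarith)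
        simp only [hL_def]; linarith
      · -- x > 2 A n
        have h := hconv.secant_mono (a := 2 * A n) (x := A n) (y := x)
          (Set.mem_Ici.2 (by linarith)) (Set.mem_Ici.2 hapos.le) (Set.mem_Ici.2 hx)
          (by intro h; nlinarith) (by intro h; rw [h] at hx2; linarith) (by linarith)
        have e3 : Φ (A n) - Φ (2*A n) = -(Φ (2*A n) - Φ (A n)) := by ring
        have e4 : A n - 2*A n = -(A n) := by ring
        rw [e3, e4, neg_div_neg_eq] at h
        have h5 : (Φ (2*A n) - Φ (A n)) / A n * (x - 2*A n) ≤ Φ x - Φ (2*A n) := by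
          rw [div_le_div_iff₀ hapos (by linarith : (0:ℝ) < x - 2*A n)] at h
          rw [div_mul_eq_mul_div, div_le_iff₀ hapos]
          linarith
        simp only [hL_def, hD_def]
        nlinarith [hΦle2 n]
  -- each line is nonpositive up to A n
  have hL_nonpos : ∀ n x, x ≤ A n → L n x ≤ 0 := by
    intro n x hx
    have h1 : D n * (x - 2*A n) ≤ D n * (A n - 2*A n) :=
      mul_le_mul_of_nonneg_left (by linarith) (hD0 n)
    have h2 : D n * (A n - 2*A n) = -(Φ (2*A n) - Φ (A n)) := by
      have hne : A n ≠ 0 := ne_of_gt (han_pos n)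
      simp only [hD_def]
      field_simp
      ring
    have h3 : 2 * Φ (A n) ≤ Φ (2 * A n) := by
      have := hchord (2 * A n) (A n) (han_pos n).le (by linarith [han_pos n])
      nlinarith [han_pos n]
    simp only [hL_def]
    rw [h2] at h1
    linarith
  set G : ℝ → ℝ := fun x => ⨆ n, L n x with hG_def
  have hGbdd : ∀ x : ℝ, 0 ≤ x → BddAbove (Set.range fun n => L n x) := by
    intro x hx
    exact ⟨Φ x, by rintro _ ⟨n, rfl⟩; exact hL_le n x hx⟩
  have hG_le : ∀ x : ℝ, 0 ≤ x → G x ≤ Φ x := by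
    intro x hx
    exact ciSup_le fun n => hL_le n x hx
  have hL_le_G : ∀ n (x : ℝ), 0 ≤ x → L n x ≤ G x := by
    intro n x hx
    exact le_ciSup (hGbdd x hx) n
  set m₀ : ℝ := Φ 1 with hm₀_def
  have hm₀pos : 0 < m₀ := hΦpos 1 one_pos
  set Ψ : ℝ → ℝ := fun x => max (m₀ * max x 0) (G (max x 0)) with hΨ_def
  have hΨeq : ∀ z : ℝ, 0 ≤ z → Ψ z = max (m₀ * z) (G z) := by
    intro z hz
    simp only [hΨ_def, max_eq_left hz]
  have hΨ0 : Ψ 0 = 0 := by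
    have hG0 : G 0 ≤ 0 := ciSup_le fun n => hL_nonpos n 0 (by linarith [ha1 n])
    rw [hΨeq 0 le_rfl, mul_zero]
    exact max_eq_left hG0
  have hΨ_ge_lin : ∀ z : ℝ, 0 ≤ z → m₀ * z ≤ Ψ z := by
    intro z hz
    rw [hΨeq z hz]; exact le_max_left _ _
  have hΨ_ge_L : ∀ n (z : ℝ), 0 ≤ z → L n z ≤ Ψ z := by
    intro n z hz
    rw [hΨeq z hz]
    exact le_trans (hL_le_G n z hz) (le_max_right _ _)
  -- convexity
  have hΨconv : ConvexOn ℝ (Set.Ici 0) Ψ := by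
    refine ⟨convex_Ici 0, ?_⟩
    intro x hx y hy s t hs ht hst
    simp only [smul_eq_mul]
    have hx0 : (0:ℝ) ≤ x := hx
    have hy0 : (0:ℝ) ≤ y := hy
    have hz0 : (0:ℝ) ≤ s * x + t * y := add_nonneg (mul_nonneg hs hx0) (mul_nonneg ht hy0)
    rw [hΨeq _ hz0]
    apply max_le
    · have h1 : m₀ * (s*x + t*y) = s * (m₀ * x) + t * (m₀ * y) := by ring
      rw [h1]
      exact add_le_add (mul_le_mul_of_nonneg_left (hΨ_ge_lin x hx0) hs)
        (mul_le_mul_of_nonneg_left (hΨ_ge_lin y hy0) ht)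
    · apply ciSup_le
      intro n
      have h1 : L n (s*x + t*y) = s * (L n x) + t * (L n y) := by
        simp only [hL_def]
        linear_combination (2 * A n * D n - Φ (A n)) * hst
      rw [h1]
      exact add_le_add (mul_le_mul_of_nonneg_left (hΨ_ge_L n x hx0) hs)
        (mul_le_mul_of_nonneg_left (hΨ_ge_L n y hy0) ht)
  have hΨpos : ∀ z : ℝ, 0 < z → 0 < Ψ z := by
    intro z hz
    exact lt_of_lt_of_le (by positivity) (hΨ_ge_lin z hz.le)
  have hΨsm : StrictMonoOn Ψ (Set.Ici 0) := by
    intro x hx y hy hxy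
    have hy0 : (0:ℝ) < y := lt_of_le_of_lt hx hxy
    have ht0 : (0:ℝ) ≤ x / y := div_nonneg hx hy0.le
    have ht1 : x / y < 1 := (div_lt_one hy0).2 hxy
    have hc := hΨconv.2 (Set.mem_Ici.2 hy0.le) Set.self_mem_Ici ht0
      (by linarith : (0:ℝ) ≤ 1 - x/y) (by ring)
    simp only [smul_eq_mul, mul_zero, add_zero, hΨ0] at hc
    rw [div_mul_cancel₀ _ (ne_of_gt hy0)] at hc
    have h2 : 0 < Ψ y := hΨpos y hy0
    nlinarith
  refine ⟨Ψ, ⟨hΨconv, hΨsm, hΨ0⟩, ⟨1, ?_⟩, ?_⟩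
  · -- eventual domination
    intro x hx
    have hx0 : (0:ℝ) ≤ x := by linarith
    rw [hΨeq x hx0]
    apply max_le
    · have := hchord x 1 zero_le_one hx
      simp only [hm₀_def]; linarith
    · exact hG_le x hx0
  · -- HJ fails
    rintro ⟨K, hK, hHJ⟩
    set S : ℝ := 2 * (K + 1) with hS_def
    set M : ℕ := ⌈12 * (K+1)^2⌉₊ with hM_def
    have hMge : 12 * (K+1)^2 ≤ (M:ℝ) := Nat.le_ceil _
    set Aₙ : ℝ := A (M+1) with hAₙ_def
    have hAlb : (M:ℝ) + 3 ≤ Aₙ := by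
      have h1 := hstep M
      have h2 := Real.exp_pos (1 + Φ (2*(A M)))
      have h3 := ha1 M
      simp only [hAₙ_def]; linarith
    have hA12 : 12 * (K+1)^2 + 3 ≤ Aₙ := by linarith
    have hApos : (0:ℝ) < Aₙ := by nlinarith [sq_nonneg (K+1)]
    have hlogA_ge : 1 + Φ (2 * A M) ≤ Real.log Aₙ := by
      have h1 : Real.exp (1 + Φ (2 * A M)) ≤ Aₙ := by
        have := hstep M
        have h3 := ha1 M
        have h4 : (0:ℝ) ≤ (M:ℝ) := Nat.cast_nonneg M
        simp only [hAₙ_def]; linarith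
      exact (Real.le_log_iff_exp_le hApos).2 h1
    have hB0 : 0 ≤ Φ (2 * A M) := hΦnonneg _ (by linarith [han_pos M])
    have hlogA1 : 1 ≤ Real.log Aₙ := by linarith
    have hSpos : (0:ℝ) < S := by simp only [hS_def]; linarith
    have hSK : K ≤ S := by simp only [hS_def]; linarith
    set u : ℝ := 2 * Aₙ / S with hu_def
    have hSu : S * u = 2 * Aₙ := by
      simp only [hu_def]
      field_simp
    have huK : K ≤ u := by
      simp only [hu_def]
      rw [le_div_iff₀ hSpos]
      simp only [hS_def]
      nlinarith
    have hupos : 0 < u := lt_of_lt_of_le hK huK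
    have huA : u ≤ Aₙ := by
      simp only [hu_def]
      rw [div_le_iff₀ hSpos]
      simp only [hS_def]
      nlinarith
    clear_value S M Aₙ u
    have hspec := hHJ S u hSK huK
    rw [hSu] at hspec
    -- lower bound of LHS
    have hψ2A_lb : ((M:ℝ) + 2) * Real.log Aₙ < orliczExp Ψ (2 * Aₙ) := by
      have h1 : Φ Aₙ ≤ 1 + Ψ (2 * Aₙ) := by
        have h2 : L (M+1) (2 * Aₙ) ≤ Ψ (2 * Aₙ) := hΨ_ge_L (M+1) _ (by linarith)
        have h3 : L (M+1) (2 * Aₙ) = Φ Aₙ := by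
          simp only [hL_def, hAₙ_def]; ring
        linarith
      have hΦA : Aₙ ^ ((M:ℝ)+2) < Φ Aₙ := by
        have := hPhiA M
        have hc : ((M+1:ℕ):ℝ) + 1 = (M:ℝ) + 2 := by push_cast; ring
        rw [hc, ← hAₙ_def] at this
        exact this
      calc ((M:ℝ) + 2) * Real.log Aₙ = Real.log (Aₙ ^ ((M:ℝ)+2)) :=
              (Real.log_rpow hApos _).symm
        _ < Real.log (Φ Aₙ) :=
              Real.log_lt_log (Real.rpow_pos_of_pos hApos _) hΦA
        _ ≤ Real.log (1 + Ψ (2 * Aₙ)) := Real.log_le_log (hΦpos Aₙ hApos) h1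
        _ = orliczExp Ψ (2 * Aₙ) := rfl
    -- upper bound for ψ(u)
    have hψu_ub : orliczExp Ψ u ≤ 3 * Real.log Aₙ := by
      have hΨu : Ψ u ≤ Φ (2 * A M) * (1 + u) := by
        rw [hΨeq u hupos.le]
        apply max_le
        · have hm₀B : m₀ ≤ Φ (2 * A M) := by
            simp only [hm₀_def]
            exact hmono (Set.mem_Ici.2 zero_le_one)
              (Set.mem_Ici.2 (by linarith [han_pos M])) (by linarith [ha1 M])
          nlinarith [hupos.le, hm₀pos]
        · apply ciSup_le
          intro j
          rcases le_or_gt j M with hj | hj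
          · have haj : A j ≤ A M := hamono hj
            have h1 : Φ (A j) ≤ Φ (2 * A M) :=
              hmono (Set.mem_Ici.2 (han_pos j).le)
                (Set.mem_Ici.2 (by linarith [han_pos M])) (by linarith [han_pos M])
            have h2 : D j ≤ Φ (2 * A M) := by
              have h3 : Φ (2 * A j) ≤ Φ (2 * A M) :=
                hmono (Set.mem_Ici.2 (by linarith [han_pos j]))
                  (Set.mem_Ici.2 (by linarith [han_pos M])) (by linarith)
              have h4 : D j ≤ Φ (2 * A j) := by
                simp only [hD_def]
                rw [div_le_iff₀ (han_pos j)]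
                nlinarith [hΦnonneg (A j) (han_pos j).le,
                  hΦnonneg (2*A j) (by linarith [han_pos j] : (0:ℝ) ≤ 2*A j), ha1 j]
              linarith
            have h5 : D j * (u - 2 * A j) ≤ D j * u :=
              mul_le_mul_of_nonneg_left (by linarith [han_pos j]) (hD0 j)
            have h6 : D j * u ≤ Φ (2 * A M) * u :=
              mul_le_mul_of_nonneg_right h2 hupos.le
            simp only [hL_def]
            nlinarith
          · have hj1 : M + 1 ≤ j := hj
            have h1 : u ≤ A j := le_trans huA (hAₙ_def ▸ hamono hj1)
            exact (hL_nonpos j u h1).trans (by positivity)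
      have hΨu_pos : 0 < 1 + Ψ u := by
        have := hΨpos u hupos; linarith
      have hB1 : (0:ℝ) < 1 + Φ (2 * A M) := by linarith
      have hu1 : (0:ℝ) < 1 + u := by linarith
      have h2 : 1 + Ψ u ≤ (1 + Φ (2*A M)) * (1 + u) := by nlinarith
      have hlog1B : Real.log (1 + Φ (2*A M)) ≤ Real.log Aₙ := by
        have := Real.log_le_sub_one_of_pos hB1
        linarith
      have hlog1u : Real.log (1 + u) ≤ 2 * Real.log Aₙ := by
        have h3 : 1 + u ≤ Aₙ * Aₙ := by nlinarith [sq_nonneg (K+1)]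
        calc Real.log (1 + u) ≤ Real.log (Aₙ * Aₙ) := Real.log_le_log hu1 h3
          _ = Real.log Aₙ + Real.log Aₙ := Real.log_mul (ne_of_gt hApos) (ne_of_gt hApos)
          _ = 2 * Real.log Aₙ := by ring
      calc orliczExp Ψ u = Real.log (1 + Ψ u) := rfl
        _ ≤ Real.log ((1 + Φ (2*A M)) * (1 + u)) := Real.log_le_log hΨu_pos h2
        _ = Real.log (1 + Φ (2*A M)) + Real.log (1 + u) :=
              Real.log_mul (ne_of_gt hB1) (ne_of_gt hu1)
        _ ≤ 3 * Real.log Aₙ := by linarith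
    have hlog1S : Real.log (1 + S) ≤ Real.log Aₙ := by
      have h1 : (0:ℝ) < 1 + S := by linarith
      have h2 : 1 + S ≤ Aₙ := by
        have : S = 2*(K+1) := hS_def
        nlinarith [sq_nonneg (K+1)]
      exact Real.log_le_log h1 h2
    -- combine
    have hrhs : K * (S * Real.log (1 + S) + S * orliczExp Ψ u)
        ≤ 8 * K * (K+1) * Real.log Aₙ := by
      have h1 : S * Real.log (1 + S) ≤ S * Real.log Aₙ :=
        mul_le_mul_of_nonneg_left hlog1S hSpos.le
      have h2 : S * orliczExp Ψ u ≤ S * (3 * Real.log Aₙ) :=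
        mul_le_mul_of_nonneg_left hψu_ub hSpos.le
      have h3 : S * Real.log (1 + S) + S * orliczExp Ψ u ≤ 4 * S * Real.log Aₙ := by
        linarith
      calc K * (S * Real.log (1 + S) + S * orliczExp Ψ u)
          ≤ K * (4 * S * Real.log Aₙ) := mul_le_mul_of_nonneg_left h3 hK.le
        _ = 8 * K * (K+1) * Real.log Aₙ := by simp only [hS_def]; ring
    have hfinal : ((M:ℝ) + 2) * Real.log Aₙ < 8 * K * (K+1) * Real.log Aₙ :=
      lt_of_lt_of_le (lt_of_lt_of_le hψ2A_lb hspec) hrhs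
    nlinarith [hlogA1, hMge, hK]
end

section
/- Let $\Psi$ be an Orlicz function with $\Psi(u)>1$ and let $X_1,\ldots,X_N$ be i.i.d. real random variables with $\mathbb{P}(X_j=u)=\mathbb{P}(X_j=-u)=\frac{1}{2N\Psi(u)}$ and $\mathbb{P}(X_j=0)=1-\frac{1}{N\Psi(u)}$. Then $\|\max_{j\le N}|X_j|\|_\Psi\le 1$ and $\mathbb{E}|\sum_{j=1}^N X_j|\le u/\Psi(u)$. -/
open MeasureTheory ProbabilityTheory

/-!
Every `X_j` lives on `{-u, 0, u}` and is nonzero with probability `1/(NΨ(u))`, so by the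
union bound `max_j |X_j|` is nonzero with probability at most `1/Ψ(u)`, and it never exceeds
`u`. Hence `𝔼 Ψ(max_j |X_j|) ≤ Ψ(u) · 1/Ψ(u) = 1`, and likewise
`𝔼|∑ X_j| ≤ ∑ 𝔼|X_j| ≤ u · ∑ ℙ(X_j ≠ 0) ≤ u/Ψ(u)`.
-/

section

variable {Ω : Type*} [MeasurableSpace Ω] {μ : Measure Ω}

theorem ae_eq_or_eq_neg_or_eq_zero [IsProbabilityMeasure μ] {Y : Ω → ℝ} (hY : Measurable Y)
    {u q : ℝ} (hu : u ≠ 0)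
    (hup : μ {ω | Y ω = u} = ENNReal.ofReal q) (hdown : μ {ω | Y ω = -u} = ENNReal.ofReal q)
    (hzero : μ {ω | Y ω = 0} = ENNReal.ofReal (1 - 2 * q)) :
    ∀ᵐ ω ∂μ, Y ω = u ∨ Y ω = -u ∨ Y ω = 0 := by
  have hm (a : ℝ) : MeasurableSet {ω | Y ω = a} := hY (measurableSet_singleton a)
  have hBC : Disjoint {ω | Y ω = -u} {ω | Y ω = 0} :=
    (Set.disjoint_singleton.2 (neg_ne_zero.2 hu)).preimage Y
  have hABC : Disjoint {ω | Y ω = u} ({ω | Y ω = -u} ∪ {ω | Y ω = 0}) :=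
    ((Set.disjoint_singleton.2 fun h => hu (by linarith))
      |>.preimage Y).union_right ((Set.disjoint_singleton.2 hu).preimage Y)
  refine (mem_ae_iff_prob_eq_one ((hm u).union ((hm (-u)).union (hm 0)))).2
    (le_antisymm prob_le_one ?_)
  calc (1 : ENNReal) = ENNReal.ofReal (q + (q + (1 - 2 * q))) := by ring_nf; simp
    _ ≤ ENNReal.ofReal q + (ENNReal.ofReal q + ENNReal.ofReal (1 - 2 * q)) :=
      ENNReal.ofReal_add_le.trans (add_le_add le_rfl ENNReal.ofReal_add_le)
    _ = _ := by
      rw [measure_union hABC ((hm (-u)).union (hm 0)), measure_union hBC (hm 0),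
        hup, hdown, hzero]

theorem measure_ne_zero_le_of_ae {Y : Ω → ℝ} {u : ℝ}
    (h : ∀ᵐ ω ∂μ, Y ω = u ∨ Y ω = -u ∨ Y ω = 0) :
    μ {ω | Y ω ≠ 0} ≤ μ {ω | Y ω = u} + μ {ω | Y ω = -u} :=
  (measure_mono_ae (h.mono fun _ hω hne => hω.imp_right (·.resolve_right hne))).trans
    (measure_union_le _ _)

theorem lintegral_nnnorm_le_mul_measure_ne_zero {E : Type*} [NormedAddCommGroup E] {Y : Ω → E}
    {u : ℝ} (h : ∀ᵐ ω ∂μ, ‖Y ω‖ ≤ u) :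
    ∫⁻ ω, ‖Y ω‖₊ ∂μ ≤ ENNReal.ofReal u * μ {ω | Y ω ≠ 0} := by
  refine (lintegral_mono_ae (h.mono fun ω hω => ?_)).trans
    (lintegral_indicator_const_le {ω | Y ω ≠ 0} (ENNReal.ofReal u))
  by_cases hY : Y ω = 0
  · simp [hY]
  · rw [Set.indicator_of_mem hY, ← enorm_eq_nnnorm, ← ofReal_norm]
    exact ENNReal.ofReal_le_ofReal hω

theorem lintegral_nnnorm_sum_le_mul_sum_measure_ne_zero {ι E : Type*} [Fintype ι]
    [NormedAddCommGroup E] {Y : ι → Ω → E} (hY : ∀ j, AEStronglyMeasurable (Y j) μ) {u : ℝ}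
    (h : ∀ᵐ ω ∂μ, ∀ j, ‖Y j ω‖ ≤ u) :
    ∫⁻ ω, ‖∑ j, Y j ω‖₊ ∂μ ≤ ENNReal.ofReal u * ∑ j, μ {ω | Y j ω ≠ 0} :=
  calc ∫⁻ ω, ‖∑ j, Y j ω‖₊ ∂μ
      ≤ ∫⁻ ω, ∑ j, (‖Y j ω‖₊ : ENNReal) ∂μ := lintegral_mono fun ω => by
        rw [← ENNReal.ofNNReal_finsetSum]; exact ENNReal.coe_le_coe.2 (nnnorm_sum_le _ _)
    _ = ∑ j, ∫⁻ ω, ‖Y j ω‖₊ ∂μ :=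
      lintegral_finsetSum' _ fun j _ => (hY j).enorm
    _ ≤ ∑ j, ENNReal.ofReal u * μ {ω | Y j ω ≠ 0} := Finset.sum_le_sum fun j _ =>
      lintegral_nnnorm_le_mul_measure_ne_zero (h.mono fun _ hω => hω j)
    _ = _ := Finset.mul_sum _ _ _ |>.symm

theorem orliczNorm_le_one {Ψ : ℝ → ℝ} {F : Type*} [NormedAddCommGroup F] {X : Ω → F}
    (h : ∫⁻ ω, ENNReal.ofReal (Ψ ‖X ω‖) ∂μ ≤ 1) : orliczNorm μ Ψ X ≤ 1 :=
  csInf_le ⟨0, fun _ ha => ha.1.le⟩ ⟨one_pos, by simpa only [div_one] using h⟩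

theorem lintegral_orlicz_iSup_abs_le {ι : Type*} [Fintype ι] {Ψ : ℝ → ℝ}
    (hmono : MonotoneOn Ψ (Set.Ici 0)) (hΨ0 : Ψ 0 = 0) {Y : ι → Ω → ℝ} {u : ℝ}
    (h : ∀ᵐ ω ∂μ, ∀ j, |Y j ω| ≤ u) :
    ∫⁻ ω, ENNReal.ofReal (Ψ ‖⨆ j, |Y j ω|‖) ∂μ ≤
      ENNReal.ofReal (Ψ u) * ∑ j, μ {ω | Y j ω ≠ 0} := by
  set S := ⋃ j, {ω | Y j ω ≠ 0}
  have hpt : ∀ᵐ ω ∂μ, ENNReal.ofReal (Ψ ‖⨆ j, |Y j ω|‖) ≤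
      S.indicator (fun _ => ENNReal.ofReal (Ψ u)) ω := by
    filter_upwards [h] with ω hω
    have hsup : 0 ≤ ⨆ j, |Y j ω| := Real.iSup_nonneg fun j => abs_nonneg _
    rw [Real.norm_of_nonneg hsup]
    by_cases hS : ω ∈ S
    · obtain ⟨j, -⟩ := Set.mem_iUnion.1 hS
      have hu : 0 ≤ u := (abs_nonneg _).trans (hω j)
      rw [Set.indicator_of_mem hS]
      exact ENNReal.ofReal_le_ofReal (hmono hsup hu (Real.iSup_le hω hu))
    · have hzero j : Y j ω = 0 := not_not.1 fun hj => hS (Set.mem_iUnion.2 ⟨j, hj⟩)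
      simp [hzero, hΨ0]
  calc ∫⁻ ω, ENNReal.ofReal (Ψ ‖⨆ j, |Y j ω|‖) ∂μ
      ≤ ∫⁻ ω, S.indicator (fun _ => ENNReal.ofReal (Ψ u)) ω ∂μ := lintegral_mono_ae hpt
    _ ≤ ENNReal.ofReal (Ψ u) * μ S := lintegral_indicator_const_le _ _
    _ ≤ _ := by gcongr; exact measure_iUnion_fintype_le μ _

end

theorem stmt13_general {Ω : Type*} [MeasurableSpace Ω] {μ : Measure Ω} [IsProbabilityMeasure μ]
    {Ψ : ℝ → ℝ} (hΨ : IsOrlicz Ψ) {u : ℝ} (hu : 0 < u)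
    {N : ℕ} (X : Fin N → Ω → ℝ)
    (hmeas : ∀ j, Measurable (X j))
    (hup : ∀ j, μ {ω | X j ω = u} = ENNReal.ofReal (1 / (2 * N * Ψ u)))
    (hdown : ∀ j, μ {ω | X j ω = -u} = ENNReal.ofReal (1 / (2 * N * Ψ u)))
    (hzero : ∀ j, μ {ω | X j ω = 0} = ENNReal.ofReal (1 - 1 / (N * Ψ u))) :
    orliczNorm μ Ψ (fun ω => ⨆ j, |X j ω|) ≤ 1 ∧
      ∫⁻ ω, ‖∑ j, X j ω‖₊ ∂μ ≤ ENNReal.ofReal (u / Ψ u) := by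
  have hΨu : 0 < Ψ u := hΨ.2.2 ▸ hΨ.2.1 Set.self_mem_Ici hu.le hu
  have hlaw j : ∀ᵐ ω ∂μ, X j ω = u ∨ X j ω = -u ∨ X j ω = 0 :=
    ae_eq_or_eq_neg_or_eq_zero (hmeas j) hu.ne' (hup j) (hdown j) (by
      rw [hzero j]; congr 2; field_simp)
  have habs : ∀ᵐ ω ∂μ, ∀ j, |X j ω| ≤ u := ae_all_iff.2 fun j => (hlaw j).mono fun ω hω => by
    rcases hω with h | h | h <;> simp [h, abs_of_pos hu, hu.le]
  have hsum : ∑ j, μ {ω | X j ω ≠ 0} ≤ ENNReal.ofReal (1 / Ψ u) := by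
    rcases Nat.eq_zero_or_pos N with rfl | hN
    · simp
    calc ∑ j, μ {ω | X j ω ≠ 0} ≤ ∑ _j : Fin N, ENNReal.ofReal (1 / (N * Ψ u)) :=
          Finset.sum_le_sum fun j _ => (measure_ne_zero_le_of_ae (hlaw j)).trans_eq (by
            rw [hup, hdown, ← ENNReal.ofReal_add (by positivity) (by positivity)]; ring_nf)
      _ = ENNReal.ofReal (1 / Ψ u) := by
        rw [Finset.sum_const, Finset.card_univ, Fintype.card_fin, nsmul_eq_mul,
          ← ENNReal.ofReal_natCast, ← ENNReal.ofReal_mul (by positivity)]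
        field_simp
  constructor
  · refine orliczNorm_le_one ?_
    grw [lintegral_orlicz_iSup_abs_le hΨ.2.1.monotoneOn hΨ.2.2 habs, hsum]
    rw [← ENNReal.ofReal_mul hΨu.le, mul_one_div_cancel hΨu.ne', ENNReal.ofReal_one]
  · grw [lintegral_nnnorm_sum_le_mul_sum_measure_ne_zero
      (fun j => (hmeas j).aestronglyMeasurable) habs, hsum]
    rw [← ENNReal.ofReal_mul hu.le, mul_one_div]

/-- Testing variables: three-point i.i.d. variables have `‖max|X_j|‖_Ψ ≤ 1` and
`𝔼|∑ X_j| ≤ u/Ψ(u)`. -/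
theorem stmt13 {Ω : Type*} [MeasurableSpace Ω] {μ : Measure Ω} [IsProbabilityMeasure μ]
    {Ψ : ℝ → ℝ} (hΨ : IsOrlicz Ψ) {u : ℝ} (hu : 0 < u) (hΨu : 1 < Ψ u)
    {N : ℕ} (hN : 0 < N) (X : Fin N → Ω → ℝ)
    (hmeas : ∀ j, Measurable (X j))
    (hindep : iIndepFun X μ)
    (hup : ∀ j, μ {ω | X j ω = u} = ENNReal.ofReal (1 / (2 * N * Ψ u)))
    (hdown : ∀ j, μ {ω | X j ω = -u} = ENNReal.ofReal (1 / (2 * N * Ψ u)))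
    (hzero : ∀ j, μ {ω | X j ω = 0} = ENNReal.ofReal (1 - 1 / (N * Ψ u))) :
    orliczNorm μ Ψ (fun ω => ⨆ j, |X j ω|) ≤ 1 ∧
      ∫⁻ ω, ‖∑ j, X j ω‖₊ ∂μ ≤ ENNReal.ofReal (u / Ψ u) :=
  stmt13_general hΨ hu X hmeas hup hdown hzero
end

section
/- Let $\Psi$ be an Orlicz function and $u>\Psi^{-1}(1)$. Let $Z$ be a Poisson random variable with parameter $1/\Psi(u)$. Then there exists a constant $C$ depending only on $\Psi$ such that for all sufficiently large $s$ and $u$, $\mathbb{P}(Z\ge\lceil 2s\rceil)\ge \exp(-C(s\ln(1+s)+s\psi(u)))$, where $\psi=\log(1+\Psi)$. -/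
open MeasureTheory ProbabilityTheory

/-!
The tail `P(Z ≥ k)` dominates the single atom `e^{-λ} λ^k / k!`, and `k! ≤ k^k`.
With `λ = 1/Ψ(u) ≤ 1` and `k = ⌈2s⌉ ≤ 3s` this gives
`P(Z ≥ k) ≥ exp(-(1 + k ln Ψ(u) + k ln k))`, and `ln Ψ(u) ≤ ψ(u)`, `ln k ≤ 2 ln(1 + s)`.
-/

open NNReal

lemma exp_neg_mul_div_pow_le_poissonMeasure_real_Ici (r : ℝ≥0) (k : ℕ) :
    Real.exp (-r) * (r / k) ^ k ≤ (poissonMeasure r).real {n | k ≤ n} := by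
  have hk : (k.factorial : ℝ) ≤ (k : ℝ) ^ k := by exact_mod_cast Nat.factorial_le_pow k
  calc Real.exp (-r) * (r / k) ^ k = Real.exp (-r) * r ^ k / (k : ℝ) ^ k := by
        rw [div_pow, mul_div_assoc]
    _ ≤ Real.exp (-r) * r ^ k / k.factorial :=
        div_le_div_of_nonneg_left (by positivity) (by positivity) hk
    _ = (poissonMeasure r).real {k} := (poissonMeasure_real_singleton r k).symm
    _ ≤ (poissonMeasure r).real {n | k ≤ n} :=
        measureReal_mono (Set.singleton_subset_iff.2 (le_refl k))

lemma exp_neg_one_add_mul_log_le {P : ℝ} (hP : 1 ≤ P) {k : ℕ} (hk : 0 < k) :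
    Real.exp (-(1 + k * (Real.log P + Real.log k))) ≤
      Real.exp (-(1 / P)) * (1 / P / k) ^ k := by
  have hP0 : 0 < P := by linarith
  have hk0 : (0 : ℝ) < k := by exact_mod_cast hk
  have hpow : (1 / P / k) ^ k = Real.exp (-(k * (Real.log P + Real.log k))) := by
    rw [← Real.log_mul hP0.ne' hk0.ne', Real.exp_neg, Real.exp_nat_mul,
      Real.exp_log (by positivity), div_div, one_div, inv_pow]
  rw [hpow, neg_add, Real.exp_add]
  gcongr
  exact div_le_one_of_le₀ hP hP0.le

lemma one_add_ceil_mul_log_le {s L ψ : ℝ} (hs : 3 ≤ s) (hL : 0 ≤ L) (hLψ : L ≤ ψ) :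
    1 + ⌈2 * s⌉₊ * (L + Real.log ⌈2 * s⌉₊) ≤ 7 * (s * Real.log (1 + s) + s * ψ) := by
  set k : ℕ := ⌈2 * s⌉₊
  have hk1 : (1 : ℝ) ≤ k := by exact_mod_cast Nat.one_le_ceil_iff.2 (by linarith)
  have hk3 : (k : ℝ) ≤ 3 * s := by
    linarith [Nat.ceil_lt_add_one (by linarith : (0 : ℝ) ≤ 2 * s)]
  have hlog_s : 1 ≤ Real.log (1 + s) := by
    rw [Real.le_log_iff_exp_le (by linarith)]
    linarith [Real.exp_one_lt_d9]
  have hlog_k : Real.log k ≤ 2 * Real.log (1 + s) := by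
    rw [← Real.log_rpow (by linarith)]
    exact Real.log_le_log (by linarith) (by norm_num; nlinarith)
  have hlog_k0 : 0 ≤ Real.log k := Real.log_nonneg hk1
  nlinarith

theorem stmt15_general {Ψ : ℝ → ℝ} :
    ∃ C > (0:ℝ), ∃ s₀ u₀ : ℝ, ∀ s ≥ s₀, ∀ u ≥ u₀, 1 < Ψ u →
      Real.exp (-(C * (s * Real.log (1 + s) + s * orliczExp Ψ u))) ≤
        ((poissonMeasure (Real.toNNReal (1 / Ψ u))) {n : ℕ | (⌈2 * s⌉₊ : ℕ) ≤ n}).toReal := by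
  refine ⟨7, by norm_num, 3, 0, fun s hs u _ hΨu => ?_⟩
  have hk : 0 < ⌈2 * s⌉₊ := Nat.ceil_pos.2 (by linarith)
  have hψ : Real.log (Ψ u) ≤ orliczExp Ψ u := Real.log_le_log (by linarith) (by linarith)
  have hr : ((1 / Ψ u).toNNReal : ℝ) = 1 / Ψ u := Real.coe_toNNReal _ (by positivity)
  calc _ ≤ Real.exp (-(1 + ⌈2 * s⌉₊ * (Real.log (Ψ u) + Real.log ⌈2 * s⌉₊))) :=
        Real.exp_le_exp.2 <| neg_le_neg <|
          one_add_ceil_mul_log_le hs (Real.log_nonneg hΨu.le) hψ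
    _ ≤ Real.exp (-(1 / Ψ u)) * (1 / Ψ u / ⌈2 * s⌉₊) ^ ⌈2 * s⌉₊ :=
        exp_neg_one_add_mul_log_le hΨu.le hk
    _ ≤ _ := by
        simpa only [hr, measureReal_def] using
          exp_neg_mul_div_pow_le_poissonMeasure_real_Ici (1 / Ψ u).toNNReal _

/-- Lower bound for Poisson tails: if `Z ~ Poisson(1/Ψ(u))` then for large `s, u`,
`P(Z ≥ ⌈2s⌉) ≥ exp(-C(s ln(1+s) + s ψ(u)))`. -/
theorem stmt15 {Ψ : ℝ → ℝ} (hΨ : IsOrlicz Ψ) :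
    ∃ C > (0:ℝ), ∃ s₀ u₀ : ℝ, ∀ s ≥ s₀, ∀ u ≥ u₀, 1 < Ψ u →
      Real.exp (-(C * (s * Real.log (1 + s) + s * orliczExp Ψ u))) ≤
        ((poissonMeasure (Real.toNNReal (1 / Ψ u))) {n : ℕ | (⌈2 * s⌉₊ : ℕ) ≤ n}).toReal :=
  stmt15_general
end
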